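/- arXiv:2006.00353 — 2 statements merged into one kernel-verified Lean document; each statement's English description precedes it below -/
import Mathlib

section
/- Let Γ be a (v,k,λ,μ)-strongly regular graph with integer eigenvalues k, ν₂ > ν₃ and μ > 0, let G act regularly on the vertices of Γ, fix a vertex α, and let Δ = {g ∈ G : α^g ~ α} ∪ {1}. Set r = gcd(ν₂(ν₃+1), ν₃(ν₂+1)) and assume gcd(r, μ) = 1. Then: (1) if r > 1, then x^G ∩ Δ ≠ ∅ for every nontrivial x ∈ G; (2) |x^G ∩ Δᶜ| is a multiple of r for every nontrivial x ∈ G, where Δᶜ = G \ Δ. -/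
/-!
The adjacency matrix `A` of `Γ` satisfies `(A - ν₂)(A - ν₃) = μJ` and `JA = kJ`, so
`E = (A - ν₃)(A - k) / ((ν₂ - ν₃)(ν₂ - k))` is idempotent (the projection onto the
`ν₂`-eigenspace). A nontrivial `x ∈ G` acts on the vertices as a fixed-point-free automorphism
whose permutation matrix `Λ` commutes with `A`. As `Λ` has finite order, `ΛE` is integral over `ℤ`,
so its trace is an integer; expanding that trace shows that the number of vertices `w` with
`x • w ~ w` is `k - ν₃ + u(ν₂ - ν₃)` for an integer `u`. Because the action is regular, this number
is `|C_G(x)| · |x^G ∩ Δ|`, and `|C_G(x)| · |x^G ∩ Δᶜ|` is `v` minus it. Modulo `r`, both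
`k - ν₃ + u(ν₂ - ν₃)` and `v` are congruent to `μ`, which is a unit modulo `r`.
-/

open Finset Matrix Polynomial

theorem IsIdempotentElem.isIntegral_mul_of_isOfFinOrder {R : Type*} [Ring R] {e u : R}
    (he : IsIdempotentElem e) (hu : IsOfFinOrder u) (hue : Commute u e) :
    IsIntegral ℤ (u * e) := by
  obtain ⟨n, hn, hun⟩ := hu.exists_pow_eq_one
  refine ⟨X ^ (n + 1) - X, monic_X_pow_sub ?_, ?_⟩
  · rw [degree_X]
    exact_mod_cast (by omega : 1 < n + 1)
  · rw [← aeval_def, map_sub, aeval_X_pow, aeval_X, hue.mul_pow, pow_succ, hun, one_mul,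
      he.pow_succ_eq, sub_self]

theorem isIdempotentElem_inv_smul_sub_mul_sub {K R : Type*} [Field K] [Ring R] [Algebra K R]
    {A : R} {a b c : K} (h : (A - a • 1) * (A - b • 1) * (A - c • 1) = 0)
    (hab : a ≠ b) (hac : a ≠ c) :
    IsIdempotentElem (((a - b) * (a - c))⁻¹ • ((A - b • 1) * (A - c • 1))) := by
  have hcomm : ∀ s t : K, Commute (A - s • 1) (A - t • 1) := fun s t =>
    ((Commute.refl A).sub_right ((Commute.one_right A).smul_right t)).sub_left
      (((Commute.one_left A).smul_left s).sub_right ((Commute.one_left _).smul_left s))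
  set P := (A - b • 1) * (A - c • 1)
  have hPa : P * (A - a • 1) = 0 :=
    ((hcomm b a).mul_left (hcomm c a)).eq.trans (by rw [← mul_assoc, h])
  have hPs : ∀ s : K, P * (A - s • 1) = (a - s) • P := fun s => by
    rw [show A - s • 1 = (A - a • 1) + (a - s) • 1 by module, mul_add, hPa, mul_smul_one,
      zero_add]
  have hPP : P * P = ((a - b) * (a - c)) • P := by
    rw [show P * P = P * (A - b • 1) * (A - c • 1) by simp only [P, mul_assoc], hPs,
      smul_mul_assoc, hPs, smul_smul]
  rw [IsIdempotentElem, smul_mul_smul_comm, hPP, smul_smul, mul_assoc,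
    inv_mul_cancel₀ (mul_ne_zero (sub_ne_zero.2 hab) (sub_ne_zero.2 hac)), mul_one]

namespace Matrix

variable {ι : Type*} [Fintype ι]

theorem of_one_mul_of_one {R : Type*} [NonAssocSemiring R] :
    (of 1 : Matrix ι ι R) * of 1 = (Fintype.card ι : R) • of 1 := by
  ext i j
  simp [mul_apply]

variable [DecidableEq ι]

theorem permMatrix_mul_of_one {R : Type*} [NonAssocSemiring R] (σ : Equiv.Perm ι) :
    σ.permMatrix R * of 1 = of 1 := by
  simp [Equiv.Perm.permMatrix, PEquiv.toMatrix_toPEquiv_mul]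
  rfl

theorem isOfFinOrder_permMatrix {R : Type*} [Semiring R] (σ : Equiv.Perm ι) :
    IsOfFinOrder (σ.permMatrix R) := by
  simpa using (permMatrixHom (R := R)).isOfFinOrder (isOfFinOrder_of_finite σ⁻¹)

theorem exists_int_trace_eq_of_isIntegral {Q : Matrix ι ι ℚ} (hQ : IsIntegral ℤ Q) :
    ∃ z : ℤ, Q.trace = z := by
  cases isEmpty_or_nonempty ι
  · exact ⟨0, by simp [trace_eq_zero_of_isEmpty]⟩
  let Q' : Matrix ι ι ℂ := Q.map (algebraMap ℚ ℂ)
  obtain ⟨p, hp, hpQ'⟩ : IsIntegral ℤ Q' :=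
    hQ.map ((algebraMap ℚ ℂ).mapMatrix (m := ι)).toIntAlgHom
  -- every eigenvalue of `Q'` is a root of the monic integer polynomial `p`
  have hroots : ∀ t ∈ Q'.charpoly.roots, IsIntegral ℤ t := by
    intro t ht
    have := spectrum.subset_polynomial_aeval Q' (p.map (algebraMap ℤ ℂ))
      ⟨t, mem_spectrum_iff_isRoot_charpoly.2 (isRoot_of_mem_roots ht), rfl⟩
    rw [aeval_map_algebraMap, aeval_def, hpQ', spectrum.zero_eq, Set.mem_singleton_iff] at this
    exact ⟨p, hp, by simpa [eval_map] using this⟩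
  have hQ'tr : IsIntegral ℤ (algebraMap ℚ ℂ Q.trace) := by
    rw [AddMonoidHom.map_trace (algebraMap ℚ ℂ), trace_eq_sum_roots_charpoly]
    exact IsIntegral.multiset_sum hroots
  obtain ⟨z, hz⟩ := IsIntegrallyClosed.isIntegral_iff.1
    ((isIntegral_algebraMap_iff (algebraMap ℚ ℂ).injective).1 hQ'tr)
  exact ⟨z, by simp [← hz]⟩

theorem mul_card_eq_of_sub_mul_sub_eq {R : Type*} [CommRing R] [Nonempty ι] {A : Matrix ι ι R}
    {a b k m : R} (hA : (A - a • 1) * (A - b • 1) = m • of 1) (hJA : of 1 * A = k • of 1) :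
    m * Fintype.card ι = (k - a) * (k - b) := by
  have hJs : ∀ s : R, of 1 * (A - s • 1) = (k - s) • (of 1 : Matrix ι ι R) := fun s => by
    rw [mul_sub, hJA, mul_smul_comm, mul_one, sub_smul]
  have h := congrArg (of 1 * ·) hA
  simp only [← mul_assoc, hJs, smul_mul_assoc, mul_smul_comm, of_one_mul_of_one, smul_smul] at h
  obtain ⟨i⟩ := ‹Nonempty ι›
  simpa [mul_comm] using (congrFun (congrFun h i) i).symm

theorem exists_int_trace_mul_eq [Nonempty ι] {A Λ : Matrix ι ι ℚ} {a b k m : ℚ}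
    (hA : (A - a • 1) * (A - b • 1) = m • of 1) (hJA : of 1 * A = k • of 1)
    (hab : a ≠ b) (hm : m ≠ 0) (hΛ : IsOfFinOrder Λ) (hΛA : Commute Λ A)
    (hΛJ : Λ * of 1 = of 1) (hΛtr : Λ.trace = 0) :
    ∃ t : ℤ, (Λ * A).trace = k - b + t * (a - b) := by
  have hcard := mul_card_eq_of_sub_mul_sub_eq hA hJA
  have hak : a ≠ k := by
    rintro rfl
    simp [hm] at hcard
  have hcube : (A - a • 1) * (A - b • 1) * (A - k • 1) = 0 := by
    rw [hA, smul_mul_assoc, mul_sub, hJA, mul_smul_comm, mul_one, sub_self, smul_zero]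
  have hE := isIdempotentElem_inv_smul_sub_mul_sub hcube hab hak
  have hΛE : Commute Λ (((a - b) * (a - k))⁻¹ • ((A - b • 1) * (A - k • 1))) :=
    ((hΛA.sub_right ((Commute.one_right Λ).smul_right b)).mul_right
      (hΛA.sub_right ((Commute.one_right Λ).smul_right k))).smul_right _
  obtain ⟨t, ht⟩ := exists_int_trace_eq_of_isIntegral (hE.isIntegral_mul_of_isOfFinOrder hΛ hΛE)
  refine ⟨t, ?_⟩
  have hP : (A - b • 1) * (A - k • 1) = m • of 1 + (a - k) • (A - b • 1) := by
    rw [← hA]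
    simp only [sub_mul, mul_sub, smul_mul_assoc, mul_smul_comm, one_mul, mul_one]
    module
  have htrP : (Λ * ((A - b • 1) * (A - k • 1))).trace
      = m * Fintype.card ι + (a - k) * (Λ * A).trace := by
    rw [hP, mul_add, mul_smul_comm, mul_smul_comm, hΛJ, mul_sub, mul_smul_comm, mul_one,
      trace_add, trace_smul, trace_smul, trace_sub, trace_smul, hΛtr]
    simp [trace]
  rw [mul_smul_comm, trace_smul, htrP, hcard, smul_eq_mul] at ht
  field_simp at ht
  exact mul_left_cancel₀ (sub_ne_zero.2 hak) (by linear_combination ht)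

end Matrix

namespace SimpleGraph

variable {V : Type*} [Fintype V] {Γ : SimpleGraph V} [DecidableRel Γ.Adj]

theorem IsRegularOfDegree.of_one_mul_adjMatrix {R : Type*} [NonAssocSemiring R] {k : ℕ}
    (h : Γ.IsRegularOfDegree k) : of 1 * Γ.adjMatrix R = (k : R) • of 1 := by
  ext v w
  simp [h w]

theorem trace_permMatrix_mul_adjMatrix [DecidableEq V] {R : Type*} [NonAssocSemiring R]
    (σ : Equiv.Perm V) : (σ.permMatrix R * Γ.adjMatrix R).trace = #{v | Γ.Adj (σ v) v} := by
  simp [Equiv.Perm.permMatrix, PEquiv.toMatrix_toPEquiv_mul, trace, adjMatrix_apply]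

theorem Iso.commute_permMatrix_adjMatrix [DecidableEq V] {R : Type*} [NonAssocSemiring R]
    (σ : Γ ≃g Γ) : Commute (Equiv.Perm.permMatrix R σ.toEquiv) (Γ.adjMatrix R) := by
  ext v w
  simp only [Equiv.Perm.permMatrix, PEquiv.toMatrix_toPEquiv_mul, PEquiv.mul_toMatrix_toPEquiv,
    submatrix_apply, id, adjMatrix_apply]
  exact if_congr σ.rel_symm_apply.symm rfl rfl

variable [DecidableEq V] {n k l m : ℕ}

theorem IsSRGWith.adjMatrix_sub_mul_sub {R : Type*} [CommRing R] {a b : R}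
    (h : Γ.IsSRGWith n k l m) (hsum : a + b = l - m) (hprod : a * b = m - k) :
    (Γ.adjMatrix R - a • 1) * (Γ.adjMatrix R - b • 1) = (m : R) • of 1 := by
  have hcompl : Γᶜ.adjMatrix R = of 1 - 1 - Γ.adjMatrix R := by
    rw [← adjMatrix_completeGraph_eq_of_one_sub_one,
      ← IsCompl.adjMatrix_add_adjMatrix_eq_adjMatrix_completeGraph R (isCompl_compl (x := Γ)),
      add_sub_cancel_left]
  have hsq := h.matrix_eq (α := R)
  rw [hcompl, sq] at hsq
  have hexp : (Γ.adjMatrix R - a • 1) * (Γ.adjMatrix R - b • 1)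
      = Γ.adjMatrix R * Γ.adjMatrix R - (a + b) • Γ.adjMatrix R + (a * b) • 1 := by
    simp only [sub_mul, mul_sub, smul_mul_assoc, mul_smul_comm, one_mul, mul_one]
    module
  rw [hexp, hsq, hsum, hprod]
  simp only [← Nat.cast_smul_eq_nsmul R]
  module

variable [Nonempty V] {ν₂ ν₃ : ℤ}

theorem IsSRGWith.mul_card_eq (h : Γ.IsSRGWith n k l m) (hsum : ν₂ + ν₃ = l - m)
    (hprod : ν₂ * ν₃ = m - k) : (m : ℤ) * n = (k - ν₂) * (k - ν₃) := by
  rw [← h.card]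
  exact mul_card_eq_of_sub_mul_sub_eq (h.adjMatrix_sub_mul_sub hsum hprod)
    h.regular.of_one_mul_adjMatrix

theorem IsSRGWith.exists_card_adj_apply_eq (h : Γ.IsSRGWith n k l m)
    (hsum : ν₂ + ν₃ = l - m) (hprod : ν₂ * ν₃ = m - k) (hm : m ≠ 0) (h23 : ν₂ ≠ ν₃)
    (σ : Γ ≃g Γ) (hσ : ∀ v, σ v ≠ v) :
    ∃ t : ℤ, (#{v | Γ.Adj (σ v) v} : ℤ) = k - ν₃ + t * (ν₂ - ν₃) := by
  have hsumℚ : (ν₂ : ℚ) + ν₃ = l - m := by exact_mod_cast hsum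
  have hprodℚ : (ν₂ : ℚ) * ν₃ = m - k := by exact_mod_cast hprod
  have htr : (Equiv.Perm.permMatrix ℚ σ.toEquiv).trace = 0 := by
    simp [trace_permutation, Function.fixedPoints, Function.IsFixedPt, hσ]
  obtain ⟨t, ht⟩ := exists_int_trace_mul_eq (h.adjMatrix_sub_mul_sub hsumℚ hprodℚ)
    h.regular.of_one_mul_adjMatrix (by exact_mod_cast h23) (by exact_mod_cast hm)
    (isOfFinOrder_permMatrix _) σ.commute_permMatrix_adjMatrix (permMatrix_mul_of_one _) htr
  rw [trace_permMatrix_mul_adjMatrix] at ht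
  exact ⟨t, by exact_mod_cast ht⟩

end SimpleGraph

open MulAction in
theorem MulAction.ncard_setOf_smul_mem {G X : Type*} [Group G] [MulAction G X] (x : X)
    (T : Set X) :
    {g : G | g • x ∈ T}.ncard = Nat.card (stabilizer G x) * (orbit G x ∩ T).ncard := by
  have hrange : orbit G x ⊆ Set.range (ofQuotientStabilizer G x) := by
    rintro _ ⟨g, rfl⟩
    exact ⟨g, ofQuotientStabilizer_mk G x g⟩
  have hpre : {g : G | g • x ∈ T}
      = QuotientGroup.mk ⁻¹' (ofQuotientStabilizer G x ⁻¹' (orbit G x ∩ T)) := by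
    ext g
    simp [ofQuotientStabilizer_mk, mem_orbit]
  rw [hpre, ← Nat.card_coe_set_eq, QuotientGroup.card_preimage_mk, Nat.card_coe_set_eq,
    Set.ncard_preimage_of_injective_subset_range (injective_ofQuotientStabilizer G x)
      (Set.inter_subset_left.trans hrange)]

section Conjugation

variable {G : Type*} [Group G]

theorem ncard_setOf_conj_mem (x : G) (T : Set G) :
    {g : G | g * x * g⁻¹ ∈ T}.ncard
      = Nat.card (Subgroup.centralizer {x}) * ({y | ∃ g : G, g * x * g⁻¹ = y} ∩ T).ncard := by
  have h := MulAction.ncard_setOf_smul_mem (G := ConjAct G) x T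
  rw [ConjAct.stabilizer_eq_centralizer] at h
  have horbit : MulAction.orbit (ConjAct G) x = {y | ∃ g : G, g * x * g⁻¹ = y} := by
    ext y
    rw [ConjAct.mem_orbit_conjAct, isConj_comm, isConj_iff]
    rfl
  rwa [horbit] at h

theorem card_centralizer_mul_conj_inter_add_compl [Finite G] (x : G) (T : Set G) :
    Nat.card (Subgroup.centralizer {x}) * ({y | ∃ g : G, g * x * g⁻¹ = y} ∩ T).ncard
      + Nat.card (Subgroup.centralizer {x}) * ({y | ∃ g : G, g * x * g⁻¹ = y} ∩ Tᶜ).ncard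
      = Nat.card G := by
  rw [← ncard_setOf_conj_mem, ← ncard_setOf_conj_mem]
  exact Set.ncard_add_ncard_compl _

variable {V : Type*} [MulAction G V]

theorem bijective_inv_smul (htrans : ∀ a b : V, ∃ g : G, g • a = b)
    (hfree : ∀ (g : G) (a : V), g • a = a → g = 1) (α : V) :
    Function.Bijective (fun g : G => g⁻¹ • α) := by
  refine ⟨fun g h (hgh : g⁻¹ • α = h⁻¹ • α) => ?_, fun w => ?_⟩
  · have := hfree (h * g⁻¹) α (by rw [mul_smul, hgh, smul_inv_smul])
    rwa [mul_inv_eq_one, eq_comm] at this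
  · obtain ⟨g, rfl⟩ := htrans α w
    exact ⟨g⁻¹, by simp⟩

theorem ncard_setOf_adj_conj_smul_eq (Γ : SimpleGraph V)
    (hpres : ∀ (g : G) (a b : V), Γ.Adj a b ↔ Γ.Adj (g • a) (g • b))
    (htrans : ∀ a b : V, ∃ g : G, g • a = b)
    (hfree : ∀ (g : G) (a : V), g • a = a → g = 1) (α : V) (x : G) :
    {g : G | Γ.Adj ((g * x * g⁻¹) • α) α}.ncard = {w : V | Γ.Adj (x • w) w}.ncard := by
  have hbij := bijective_inv_smul htrans hfree α
  have hpre : {g : G | Γ.Adj ((g * x * g⁻¹) • α) α}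
      = (fun g : G => g⁻¹ • α) ⁻¹' {w : V | Γ.Adj (x • w) w} := by
    ext g
    simp only [Set.mem_ofPred_eq, Set.mem_preimage, hpres g (x • g⁻¹ • α), smul_inv_smul,
      mul_smul]
  rw [hpre, Set.ncard_preimage_of_injective_subset_range hbij.1
    (hbij.2.range_eq ▸ Set.subset_univ _)]

theorem SimpleGraph.IsSRGWith.exists_card_centralizer_mul_ncard_conj_inter_eq [Fintype V]
    {Γ : SimpleGraph V} [DecidableRel Γ.Adj] {n k l m : ℕ} {ν₂ ν₃ : ℤ}
    (h : Γ.IsSRGWith n k l m) (hsum : ν₂ + ν₃ = l - m) (hprod : ν₂ * ν₃ = m - k) (hm : m ≠ 0)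
    (h23 : ν₂ ≠ ν₃) (hpres : ∀ (g : G) (a b : V), Γ.Adj a b ↔ Γ.Adj (g • a) (g • b))
    (htrans : ∀ a b : V, ∃ g : G, g • a = b)
    (hfree : ∀ (g : G) (a : V), g • a = a → g = 1) (α : V) {x : G} (hx : x ≠ 1) :
    ∃ t : ℤ, (Nat.card (Subgroup.centralizer {x}) * ({y | ∃ g : G, g * x * g⁻¹ = y} ∩
      ({g : G | Γ.Adj (g • α) α} ∪ {1})).ncard : ℤ) = k - ν₃ + t * (ν₂ - ν₃) := by
  classical
  have : Nonempty V := ⟨α⟩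
  let σ : Γ ≃g Γ := ⟨MulAction.toPerm x, (hpres x _ _).symm⟩
  obtain ⟨t, ht⟩ := h.exists_card_adj_apply_eq hsum hprod hm h23 σ fun w hw => hx (hfree x w hw)
  refine ⟨t, ?_⟩
  have hΔ : {g : G | g * x * g⁻¹ ∈ ({g : G | Γ.Adj (g • α) α} ∪ {1})}
      = {g : G | Γ.Adj ((g * x * g⁻¹) • α) α} := by
    ext g
    simp [hx]
  rw [← Nat.cast_mul, ← ncard_setOf_conj_mem, hΔ, ncard_setOf_adj_conj_smul_eq Γ hpres htrans hfree,
    Set.ncard_eq_toFinset_card', Set.toFinset_ofPred]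
  exact ht

end Conjugation

theorem add_eq_and_mul_eq_of_eq_quadratic_roots {s D a b : ℝ} (ha : a = (s + √D) / 2)
    (hb : b = (s - √D) / 2) (hab : a ≠ b) : a + b = s ∧ a * b = (s ^ 2 - D) / 4 := by
  have hD : 0 ≤ D := by
    by_contra! hD
    exact hab (by rw [ha, hb, Real.sqrt_eq_zero_of_nonpos hD.le, add_zero, sub_zero])
  refine ⟨by rw [ha, hb]; ring, ?_⟩
  rw [ha, hb]
  linear_combination (-1 / 4 : ℝ) * Real.sq_sqrt hD

theorem dvd_sub_of_mul_eq_sub_mul_sub {a b d m v : ℤ} (h : m * v = (m - a) * (m - b))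
    (ha : d ∣ a) (hb : d ∣ b) (hdm : IsCoprime d m) : d ∣ v - m := by
  refine hdm.dvd_of_dvd_mul_left ?_
  rw [show m * (v - m) = a * b - m * (a + b) by linear_combination h]
  exact dvd_sub (dvd_mul_of_dvd_left ha b) (dvd_mul_of_dvd_right (dvd_add ha hb) m)

theorem gcd_eq_one_of_eq_zero_and_gcd_dvd {a b m v t : ℤ} {c n₁ n₂ : ℕ}
    (hv : m * v = (m - a) * (m - b)) (hcop : IsCoprime (Int.gcd a b : ℤ) m)
    (h₁ : (c * n₁ : ℤ) = m - b + t * (a - b)) (h₂ : (c * n₁ + c * n₂ : ℤ) = v) :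
    (n₁ = 0 → Int.gcd a b = 1) ∧ Int.gcd a b ∣ n₂ := by
  set d := Int.gcd a b
  have ha : (d : ℤ) ∣ a := Int.gcd_dvd_left _ _
  have hb : (d : ℤ) ∣ b := Int.gcd_dvd_right _ _
  have hn₁ : (d : ℤ) ∣ c * n₁ - m := by
    rw [h₁, show m - b + t * (a - b) - m = t * (a - b) - b by ring]
    exact dvd_sub (dvd_mul_of_dvd_right (dvd_sub ha hb) t) hb
  obtain ⟨q, hq⟩ := dvd_sub_of_mul_eq_sub_mul_sub hv ha hb hcop
  refine ⟨fun h0 => ?_, ?_⟩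
  · have hdm : (d : ℤ) ∣ m := by simpa [h0] using hn₁
    simpa using Int.isUnit_iff_natAbs_eq.1 (hcop.isUnit_of_dvd' dvd_rfl hdm)
  · have hdv : IsCoprime (d : ℤ) v := by simpa [← hq] using hcop.add_mul_left_right q
    have hdc : IsCoprime (d : ℤ) c :=
      hdv.of_isCoprime_of_dvd_right ⟨n₁ + n₂, by linear_combination -h₂⟩
    have hn₂ : (d : ℤ) ∣ c * n₂ := by
      rw [show (c * n₂ : ℤ) = (v - m) - (c * n₁ - m) by linear_combination h₂]
      exact dvd_sub ⟨q, hq⟩ hn₁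
    exact Int.natCast_dvd_natCast.1 (hdc.dvd_of_dvd_mul_left hn₂)

theorem regular_action_gcd_restriction_general {V G : Type*} [Fintype V] [Group G]
    (Γ : SimpleGraph V) [DecidableRel Γ.Adj] [MulAction G V]
    (v k l m : ℕ) (ν₂ ν₃ : ℤ) (r : ℕ)
    (h : Γ.IsSRGWith v k l m) (hm : 0 < m)
    (hν₂ : (ν₂ : ℝ) = ((l : ℝ) - m + Real.sqrt (((l : ℝ) - m) ^ 2 + 4 * ((k : ℝ) - m))) / 2)
    (hν₃ : (ν₃ : ℝ) = ((l : ℝ) - m - Real.sqrt (((l : ℝ) - m) ^ 2 + 4 * ((k : ℝ) - m))) / 2)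
    (h23 : ν₂ > ν₃)
    (hr : r = Int.gcd (ν₂ * (ν₃ + 1)) (ν₃ * (ν₂ + 1)))
    (hcop : Nat.gcd r m = 1)
    (hpres : ∀ (g : G) (a b : V), Γ.Adj a b ↔ Γ.Adj (g • a) (g • b))
    (htrans : ∀ a b : V, ∃ g : G, g • a = b)
    (hfree : ∀ (g : G) (a : V), g • a = a → g = 1)
    (α : V) :
    (1 < r → ∀ x : G, x ≠ 1 →
        ({y : G | ∃ g : G, g * x * g⁻¹ = y} ∩
          ({g : G | Γ.Adj (g • α) α} ∪ {1})).Nonempty) ∧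
    (∀ x : G, x ≠ 1 →
        r ∣ Set.ncard ({y : G | ∃ g : G, g * x * g⁻¹ = y} ∩
          (({g : G | Γ.Adj (g • α) α} ∪ {1}) : Set G)ᶜ)) := by
  classical
  have : Nonempty V := ⟨α⟩
  obtain ⟨hsum, hprod⟩ : ν₂ + ν₃ = l - m ∧ ν₂ * ν₃ = m - k := by
    obtain ⟨hs, hp⟩ := add_eq_and_mul_eq_of_eq_quadratic_roots hν₂ hν₃ (by exact_mod_cast h23.ne')
    exact ⟨by exact_mod_cast hs, by exact_mod_cast (hp.trans (by ring) : (ν₂ : ℝ) * ν₃ = m - k)⟩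
  have hbij := bijective_inv_smul htrans hfree α
  have : Finite G := Finite.of_injective _ hbij.1
  have hcardG : Nat.card G = v := by
    rw [Nat.card_eq_of_bijective _ hbij, Nat.card_eq_fintype_card, h.card]
  have hmv : (m : ℤ) * v = (m - ν₂ * (ν₃ + 1)) * (m - ν₃ * (ν₂ + 1)) := by
    linear_combination h.mul_card_eq hsum hprod + (k - ν₂ + m - ν₃ * (ν₂ + 1)) * hprod
  set Δ : Set G := {g : G | Γ.Adj (g • α) α} ∪ {1}
  have key : ∀ x : G, x ≠ 1 → (({y | ∃ g : G, g * x * g⁻¹ = y} ∩ Δ).ncard = 0 → r = 1) ∧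
      r ∣ ({y | ∃ g : G, g * x * g⁻¹ = y} ∩ Δᶜ).ncard := fun x hx => by
    obtain ⟨t, ht⟩ := h.exists_card_centralizer_mul_ncard_conj_inter_eq hsum hprod hm.ne' h23.ne'
      hpres htrans hfree α hx
    subst hr
    exact gcd_eq_one_of_eq_zero_and_gcd_dvd (t := t) hmv (Nat.isCoprime_iff_coprime.2 hcop)
      (ht.trans (by linear_combination hprod))
      (by exact_mod_cast (card_centralizer_mul_conj_inter_add_compl x Δ).trans hcardG)
  refine ⟨fun hr1 x hx => ?_, fun x hx => (key x hx).2⟩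
  by_contra hne
  rw [Set.not_nonempty_iff_eq_empty] at hne
  have := (key x hx).1 (by rw [hne, Set.ncard_empty])
  omega

/-- Let `Γ` be a `(v,k,λ,μ)`-strongly regular graph with integer eigenvalues
`k, ν₂ > ν₃` and `μ > 0`, let `G` act regularly on the vertices of `Γ`, fix a vertex
`α`, and let `Δ = {g : Γ.Adj (g • α) α} ∪ {1}`.  Set `r = gcd(ν₂(ν₃+1), ν₃(ν₂+1))`
and assume `gcd(r, μ) = 1`.  Then: (1) if `r > 1` then `x^G ∩ Δ ≠ ∅` for every
nontrivial `x`; (2) `|x^G ∩ Δᶜ|` is a multiple of `r` for every nontrivial `x`. -/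
theorem regular_action_gcd_restriction {V G : Type*} [Fintype V] [Group G] [Fintype G]
    (Γ : SimpleGraph V) [DecidableRel Γ.Adj] [MulAction G V]
    (v k l m : ℕ) (ν₂ ν₃ : ℤ) (r : ℕ)
    (h : Γ.IsSRGWith v k l m) (hm : 0 < m)
    (hν₂ : (ν₂ : ℝ) = ((l : ℝ) - m + Real.sqrt (((l : ℝ) - m) ^ 2 + 4 * ((k : ℝ) - m))) / 2)
    (hν₃ : (ν₃ : ℝ) = ((l : ℝ) - m - Real.sqrt (((l : ℝ) - m) ^ 2 + 4 * ((k : ℝ) - m))) / 2)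
    (h23 : ν₂ > ν₃)
    (hr : r = Int.gcd (ν₂ * (ν₃ + 1)) (ν₃ * (ν₂ + 1)))
    (hcop : Nat.gcd r m = 1)
    (hpres : ∀ (g : G) (a b : V), Γ.Adj a b ↔ Γ.Adj (g • a) (g • b))
    (htrans : ∀ a b : V, ∃ g : G, g • a = b)
    (hfree : ∀ (g : G) (a : V), g • a = a → g = 1)
    (α : V) :
    (1 < r → ∀ x : G, x ≠ 1 →
        ({y : G | ∃ g : G, g * x * g⁻¹ = y} ∩
          ({g : G | Γ.Adj (g • α) α} ∪ {1})).Nonempty) ∧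
    (∀ x : G, x ≠ 1 →
        r ∣ Set.ncard ({y : G | ∃ g : G, g * x * g⁻¹ = y} ∩
          (({g : G | Γ.Adj (g • α) α} ∪ {1}) : Set G)ᶜ)) :=
  regular_action_gcd_restriction_general Γ v k l m ν₂ ν₃ r h hm hν₂ hν₃ h23 hr hcop hpres htrans
    hfree α
end

section
/- Let G be a finite group of order v with nontrivial center, and let (v,k,λ,μ) be parameters of a non-conference strongly regular graph with integer eigenvalues ν₂ > ν₃ such that ν₂ − ν₃ divides neither μ − ν₃(ν₂+1) nor v − 2k + λ − ν₃(ν₂+1). Then G contains no regular (v,k,λ,μ)-partial difference set; equivalently, G cannot act regularly on the vertex set of a (v,k,λ,μ)-strongly regular graph. -/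
/-!
Let `A` be the adjacency matrix of `Cay(G, S)` and `J` the all-ones matrix. The SRG identity
`A² = (k - μ) I + (λ - μ) A + μ J` makes `E = (A - ν₃ I - ((k - ν₃) / v) J) / (ν₂ - ν₃)` an
idempotent. Left translation by a central `z ≠ 1` is a permutation matrix `P` of finite order
commuting with `A` and `J`, so `(P E)^(ord z + 1) = P E`: the rational number `tr (P E)` is an
algebraic integer, hence an integer. Since `tr P = 0`, `tr (P J) = v` and `tr (P A) = v` or `0`
according as `z ∈ S` or not, this says `ν₂ - ν₃ ∣ v - k + ν₃` or `ν₂ - ν₃ ∣ k - ν₃`, which are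
the two excluded divisibilities.
-/

open Matrix Polynomial Finset

/-- `S` is a regular `(v,k,λ,μ)`-partial difference set in the finite group `G`:
`|G| = v`, `|S| = k`, `1 ∉ S`, `S = S⁻¹`, and every nonidentity element `g` has
exactly `λ` representations `g = a * b⁻¹` with `a, b ∈ S` if `g ∈ S`, and exactly
`μ` such representations if `g ∉ S`. -/
def IsRegularPDS {G : Type*} [Group G] [Fintype G] [DecidableEq G]
    (S : Finset G) (v k l m : ℕ) : Prop :=
  Fintype.card G = v ∧ S.card = k ∧ (1 : G) ∉ S ∧ (∀ s : G, s ∈ S ↔ s⁻¹ ∈ S) ∧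
    (∀ g ∈ S, ((S ×ˢ S).filter (fun p => p.1 * p.2⁻¹ = g)).card = l) ∧
    (∀ g : G, g ∉ S → g ≠ 1 → ((S ×ˢ S).filter (fun p => p.1 * p.2⁻¹ = g)).card = m)

theorem spectrum.isIntegral_of_mem {R K A : Type*} [CommRing R] [Field K] [Ring A]
    [Nontrivial A] [Algebra R K] [Algebra K A] [Algebra R A] [IsScalarTower R K A]
    {a : A} (ha : IsIntegral R a) {α : K} (hα : α ∈ spectrum K a) : IsIntegral R α := by
  obtain ⟨p, hp, hpa⟩ := ha
  have := spectrum.subset_polynomial_aeval a (p.map (algebraMap R K)) ⟨α, hα, rfl⟩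
  rw [aeval_map_algebraMap, aeval_def, hpa, spectrum.zero_eq, Set.mem_singleton_iff] at this
  exact ⟨p, hp, by simpa only [eval_map] using this⟩

theorem Matrix.isIntegral_trace {n R K : Type*} [Fintype n] [DecidableEq n] [CommRing R]
    [Field K] [Algebra R K] {M : Matrix n n K} (hM : IsIntegral R M) : IsIntegral R M.trace := by
  cases isEmpty_or_nonempty n
  · simpa using isIntegral_zero
  set L := AlgebraicClosure K
  let f : Matrix n n K →ₐ[R] Matrix n n L := (IsScalarTower.toAlgHom R K L).mapMatrix
  rw [← isIntegral_algebraMap_iff (algebraMap K L).injective, AddMonoidHom.map_trace,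
    trace_eq_sum_roots_charpoly]
  refine (integralClosure R L).multiset_sum_mem fun α hα => ?_
  exact spectrum.isIntegral_of_mem (hM.map f)
    (mem_spectrum_of_isRoot_charpoly (isRoot_of_mem_roots hα))

theorem IsIdempotentElem.isIntegral_mul {A : Type*} [Ring A] {p e : A} (he : IsIdempotentElem e)
    (hp : IsOfFinOrder p) (hpe : Commute p e) : IsIntegral ℤ (p * e) := by
  have hpow : (p * e) ^ (orderOf p + 1) = p * e := by
    rw [hpe.mul_pow, he.pow_succ_eq, pow_succ, pow_orderOf_eq_one, one_mul]
  refine ⟨X ^ (orderOf p + 1) - X, monic_X_pow_sub ?_, ?_⟩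
  · rw [degree_X]
    exact_mod_cast Nat.succ_lt_succ hp.orderOf_pos
  · simp [eval₂_sub, hpow]

/-- For a strongly regular graph with adjacency matrix `a`, all-ones matrix `j` and restricted
eigenvalues `ν₂ ≠ ν₃`, the projection onto the `ν₂`-eigenspace. -/
def srgIdempotent {K R : Type*} [Field K] [Ring R] [Algebra K R] (a j : R) (v k ν₂ ν₃ : K) : R :=
  (ν₂ - ν₃)⁻¹ • (a - ν₃ • 1 - ((k - ν₃) / v) • j)

theorem isIdempotentElem_srgIdempotent {K R : Type*} [Field K] [Ring R] [Algebra K R]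
    {a j : R} {v k l m ν₂ ν₃ : K} (hv : v ≠ 0) (hj : j ≠ 0) (hν : ν₂ ≠ ν₃)
    (hsum : ν₂ + ν₃ = l - m) (hprod : ν₂ * ν₃ = m - k)
    (haa : a * a = (k - m) • 1 + (l - m) • a + m • j)
    (haj : a * j = k • j) (hja : j * a = k • j) (hjj : j * j = v • j) :
    IsIdempotentElem (srgIdempotent a j v k ν₂ ν₃) := by
  have hk : k * k = (k - m) + (l - m) * k + m * v := by
    refine smul_left_injective K hj ?_
    calc (k * k) • j = a * (a * j) := by rw [haj, mul_smul_comm, haj, smul_smul]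
      _ = ((k - m) + (l - m) * k + m * v) • j := by
        rw [← mul_assoc, haa]
        simp only [add_mul, smul_mul_assoc, one_mul, haj, hjj, smul_smul, add_smul]
  have hmv : m * v = (k - ν₂) * (k - ν₃) := by linear_combination -hk + k * hsum - hprod
  have hd : ν₂ - ν₃ ≠ 0 := sub_ne_zero.mpr hν
  unfold IsIdempotentElem srgIdempotent
  simp only [sub_mul, mul_sub, smul_mul_assoc, mul_smul_comm, one_mul,
    mul_one, haa, haj, hja, hjj, smul_sub, smul_add, smul_smul]
  match_scalars
  · field_simp
    linear_combination hprod
  · field_simp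
    linear_combination -hsum
  · field_simp
    linear_combination hmv

section Cayley

variable {G : Type*} [Group G] [DecidableEq G]

theorem card_filter_mul_inv_eq_one (S : Finset G) :
    #((S ×ˢ S).filter fun p => p.1 * p.2⁻¹ = 1) = #S := by
  refine card_bij (fun p _ => p.1) (fun p hp => (mem_product.1 (mem_filter.1 hp).1).1) ?_ ?_
  · intro p hp q hq h
    simp only [mem_filter, mul_inv_eq_one] at hp hq
    exact Prod.ext h (hp.2.symm.trans (h.trans hq.2))
  · exact fun a ha => ⟨(a, a), by simp [ha], rfl⟩

variable [Fintype G]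

def cayleyMatrix (R : Type*) [Zero R] [One R] (S : Finset G) : Matrix G G R :=
  of fun x y => if x * y⁻¹ ∈ S then 1 else 0

variable {R : Type*} [Ring R]

theorem cayleyMatrix_mul_self_apply {S : Finset G} (hS : ∀ s, s ∈ S ↔ s⁻¹ ∈ S) (x y : G) :
    (cayleyMatrix R S * cayleyMatrix R S) x y
      = #((S ×ˢ S).filter fun p => p.1 * p.2⁻¹ = x * y⁻¹) := by
  simp only [mul_apply, cayleyMatrix, of_apply, mul_ite, mul_one, mul_zero, ← ite_and,
    sum_boole]
  congr 1
  refine card_bij (fun t _ => (x * t⁻¹, y * t⁻¹)) ?_ ?_ ?_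
  · intro t ht
    simp only [mem_filter, mem_univ, true_and] at ht
    simp only [mem_filter, mem_product]
    exact ⟨⟨ht.2, (hS _).2 (by simpa using ht.1)⟩, by group⟩
  · intro a _ b _ h
    simpa using congrArg Prod.fst h
  · rintro ⟨a, b⟩ hab
    simp only [mem_filter, mem_product] at hab
    obtain ⟨⟨ha, hb⟩, hab⟩ := hab
    obtain rfl : b = y * x⁻¹ * a := by
      calc b = (a * b⁻¹)⁻¹ * a := by group
        _ = y * x⁻¹ * a := by rw [hab]; group
    refine ⟨a⁻¹ * x, ?_, by ext <;> simp [mul_assoc]⟩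
    simp only [mem_filter, mem_univ, true_and]
    exact ⟨by simpa [mul_assoc] using (hS _).1 hb, by simpa using ha⟩

theorem cayleyMatrix_mul_allOnes (S : Finset G) :
    cayleyMatrix R S * of (fun _ _ => 1) = (#S : R) • of fun _ _ => 1 := by
  ext x y
  have := (Equiv.divLeft x).sum_comp fun s => if s ∈ S then (1 : R) else 0
  simp_all [mul_apply, cayleyMatrix, div_eq_mul_inv]

theorem allOnes_mul_cayleyMatrix (S : Finset G) :
    of (fun _ _ => 1) * cayleyMatrix R S = (#S : R) • of fun _ _ => 1 := by
  ext x y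
  have := (Equiv.divRight y).sum_comp fun s => if s ∈ S then (1 : R) else 0
  simp_all [mul_apply, cayleyMatrix, div_eq_mul_inv]

theorem IsRegularPDS.cayleyMatrix_mul_self {S : Finset G} {v k l m : ℕ}
    (hS : IsRegularPDS S v k l m) :
    cayleyMatrix R S * cayleyMatrix R S
      = ((k : R) - m) • 1 + ((l : R) - m) • cayleyMatrix R S + (m : R) • of fun _ _ => 1 := by
  obtain ⟨-, hk, h1, hsym, hl, hm⟩ := hS
  ext x y
  rw [cayleyMatrix_mul_self_apply hsym]
  simp only [Matrix.add_apply, Matrix.smul_apply, one_apply, cayleyMatrix, of_apply, smul_eq_mul,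
    mul_ite, mul_one, mul_zero]
  by_cases hxy : x = y
  · subst hxy
    simp [h1, card_filter_mul_inv_eq_one, hk]
  · have hne : x * y⁻¹ ≠ 1 := by rwa [Ne, mul_inv_eq_one]
    by_cases hmem : x * y⁻¹ ∈ S
    · simp [hxy, hmem, hl _ hmem]
    · simp [hxy, hmem, hm _ hmem hne]

theorem commute_permMatrix_cayleyMatrix {z : G} (hz : z ∈ Subgroup.center G) (S : Finset G) :
    Commute ((Equiv.mulLeft z).permMatrix R) (cayleyMatrix R S) := by
  ext x y
  rw [PEquiv.toMatrix_toPEquiv_mul, PEquiv.mul_toMatrix_toPEquiv]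
  simp [cayleyMatrix, mul_assoc, (Subgroup.mem_center_iff.1 hz _).symm]

theorem commute_permMatrix_allOnes (z : G) :
    Commute ((Equiv.mulLeft z).permMatrix R) (of fun _ _ => 1) := by
  ext x y
  rw [PEquiv.toMatrix_toPEquiv_mul, PEquiv.mul_toMatrix_toPEquiv]
  rfl

theorem trace_permMatrix_mulLeft {z : G} (hz : z ≠ 1) :
    ((Equiv.mulLeft z).permMatrix R).trace = 0 := by
  rw [trace_permutation]
  simp [Function.fixedPoints, Function.IsFixedPt, hz]

theorem trace_permMatrix_mul_cayleyMatrix (z : G) (S : Finset G) :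
    ((Equiv.mulLeft z).permMatrix R * cayleyMatrix R S).trace
      = if z ∈ S then (Fintype.card G : R) else 0 := by
  rw [PEquiv.toMatrix_toPEquiv_mul]
  split_ifs with hz <;> simp [trace, cayleyMatrix, hz]

theorem trace_permMatrix_mul_allOnes (z : G) :
    ((Equiv.mulLeft z).permMatrix R * of fun _ _ => 1).trace = (Fintype.card G : R) := by
  rw [PEquiv.toMatrix_toPEquiv_mul]
  simp [trace]

end Cayley

theorem add_eq_and_mul_eq_of_eq_quadratic_roots_s14 {b c x y : ℝ}
    (hx : x = (b + √(b ^ 2 + 4 * c)) / 2) (hy : y = (b - √(b ^ 2 + 4 * c)) / 2) (hyx : y < x) :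
    x + y = b ∧ x * y = -c := by
  have hD : 0 ≤ b ^ 2 + 4 * c := by
    refine le_of_lt (Real.sqrt_pos.1 ?_)
    linarith
  have hsq := Real.sq_sqrt hD
  subst hx hy
  constructor
  · ring
  · linear_combination -hsq / 4

theorem IsRegularPDS.sub_dvd_of_mem_center {G : Type*} [Group G] [Fintype G] [DecidableEq G]
    {S : Finset G} {v k l m : ℕ} (hS : IsRegularPDS S v k l m) {ν₂ ν₃ : ℤ} (hν : ν₂ ≠ ν₃)
    (hsum : ν₂ + ν₃ = (l : ℤ) - m) (hprod : ν₂ * ν₃ = (m : ℤ) - k)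
    {z : G} (hz : z ∈ Subgroup.center G) (hz1 : z ≠ 1) :
    ν₂ - ν₃ ∣ (if z ∈ S then (v : ℤ) else 0) - (k - ν₃) := by
  obtain ⟨hv, hk, -⟩ := id hS
  set A := cayleyMatrix ℚ S
  set J : Matrix G G ℚ := of fun _ _ => 1
  set P := (Equiv.mulLeft z).permMatrix ℚ
  set E := srgIdempotent A J (v : ℚ) k ν₂ ν₃
  have hv0 : (v : ℚ) ≠ 0 := hv ▸ Nat.cast_ne_zero.2 Fintype.card_ne_zero
  have hd : (ν₂ - ν₃ : ℚ) ≠ 0 := sub_ne_zero.2 (Int.cast_injective.ne hν)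
  have hJJ : J * J = (v : ℚ) • J := by
    ext
    simp [J, mul_apply, hv]
  have hE : IsIdempotentElem E :=
    isIdempotentElem_srgIdempotent (l := (l : ℚ)) (m := (m : ℚ)) hv0
      (fun h => one_ne_zero (congrFun₂ h 1 1)) (by exact_mod_cast hν)
      (by exact_mod_cast hsum) (by exact_mod_cast hprod) hS.cayleyMatrix_mul_self
      (by rw [cayleyMatrix_mul_allOnes, hk]) (by rw [allOnes_mul_cayleyMatrix, hk]) hJJ
  have hP : IsOfFinOrder P := by
    simpa using (permMatrixHom (R := ℚ)).isOfFinOrder (isOfFinOrder_of_finite (Equiv.mulLeft z)⁻¹)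
  have hPE : Commute P E := by
    have hPA : Commute P A := commute_permMatrix_cayleyMatrix hz S
    have hPJ : Commute P J := commute_permMatrix_allOnes z
    exact ((hPA.sub_right ((Commute.one_right P).smul_right _)).sub_right
      (hPJ.smul_right _)).smul_right _
  obtain ⟨t, ht⟩ : ∃ t : ℤ, (t : ℚ) = (P * E).trace :=
    IsIntegrallyClosed.isIntegral_iff.1 (isIntegral_trace (hE.isIntegral_mul hP hPE))
  have htr : (P * E).trace = (ν₂ - ν₃ : ℚ)⁻¹ * ((if z ∈ S then (v : ℚ) else 0) - (k - ν₃)) := by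
    simp only [E, P, A, J, srgIdempotent, mul_smul_comm, mul_sub, trace_smul, trace_sub, mul_one,
      trace_permMatrix_mul_cayleyMatrix, trace_permMatrix_mulLeft hz1,
      trace_permMatrix_mul_allOnes, hv, smul_eq_mul, mul_zero, sub_zero]
    field_simp
  refine ⟨t, ?_⟩
  rw [htr, eq_inv_mul_iff_mul_eq₀ hd] at ht
  exact_mod_cast ht.symm

theorem no_pds_of_nontrivial_center_general {G : Type*} [Group G] [Fintype G] [DecidableEq G]
    (v k l m : ℕ) (ν₂ ν₃ : ℤ)
    (hZ : Nontrivial (Subgroup.center G))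
    (hν₂ : (ν₂ : ℝ) = ((l : ℝ) - m + Real.sqrt (((l : ℝ) - m) ^ 2 + 4 * ((k : ℝ) - m))) / 2)
    (hν₃ : (ν₃ : ℝ) = ((l : ℝ) - m - Real.sqrt (((l : ℝ) - m) ^ 2 + 4 * ((k : ℝ) - m))) / 2)
    (h23 : ν₂ > ν₃)
    (hd1 : ¬ (ν₂ - ν₃ ∣ (m : ℤ) - ν₃ * (ν₂ + 1)))
    (hd2 : ¬ (ν₂ - ν₃ ∣ (v : ℤ) - 2 * k + l - ν₃ * (ν₂ + 1))) :
    ¬ ∃ S : Finset G, IsRegularPDS S v k l m := by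
  rintro ⟨S, hS⟩
  obtain ⟨⟨z, hz⟩, hz1⟩ := exists_ne (1 : Subgroup.center G)
  obtain ⟨hsum, hprod⟩ := add_eq_and_mul_eq_of_eq_quadratic_roots_s14 hν₂ hν₃ (by exact_mod_cast h23)
  replace hsum : ν₂ + ν₃ = (l : ℤ) - m := by exact_mod_cast hsum
  replace hprod : ν₂ * ν₃ = (m : ℤ) - k := by exact_mod_cast hprod.trans (neg_sub _ _)
  have hdvd := hS.sub_dvd_of_mem_center h23.ne' hsum hprod hz (by simpa using hz1)
  split_ifs at hdvd
  · refine hd2 ?_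
    rw [show (v : ℤ) - 2 * k + l - ν₃ * (ν₂ + 1) = v - (k - ν₃) + (ν₂ - ν₃) by
      linear_combination -hsum - hprod]
    exact dvd_add hdvd dvd_rfl
  · refine hd1 ?_
    rw [show (m : ℤ) - ν₃ * (ν₂ + 1) = -(0 - (k - ν₃)) by linear_combination -hprod]
    exact hdvd.neg_right

/-- Let `G` be a finite group of order `v` with nontrivial center, and let
`(v,k,λ,μ)` be parameters of a non-conference strongly regular graph with integer
eigenvalues `ν₂ > ν₃` such that `ν₂ - ν₃` divides neither `μ - ν₃(ν₂+1)` nor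
`v - 2k + λ - ν₃(ν₂+1)`.  Then `G` contains no regular `(v,k,λ,μ)`-partial
difference set. -/
theorem no_pds_of_nontrivial_center {G : Type*} [Group G] [Fintype G] [DecidableEq G]
    (v k l m : ℕ) (ν₂ ν₃ : ℤ)
    (hv : Fintype.card G = v)
    (hZ : Nontrivial (Subgroup.center G))
    (hconf : ¬ (2 * (k : ℤ) = (v : ℤ) - 1 ∧ 4 * (l : ℤ) = (v : ℤ) - 5 ∧
      4 * (m : ℤ) = (v : ℤ) - 1))
    (hν₂ : (ν₂ : ℝ) = ((l : ℝ) - m + Real.sqrt (((l : ℝ) - m) ^ 2 + 4 * ((k : ℝ) - m))) / 2)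
    (hν₃ : (ν₃ : ℝ) = ((l : ℝ) - m - Real.sqrt (((l : ℝ) - m) ^ 2 + 4 * ((k : ℝ) - m))) / 2)
    (h23 : ν₂ > ν₃)
    (hd1 : ¬ (ν₂ - ν₃ ∣ (m : ℤ) - ν₃ * (ν₂ + 1)))
    (hd2 : ¬ (ν₂ - ν₃ ∣ (v : ℤ) - 2 * k + l - ν₃ * (ν₂ + 1))) :
    ¬ ∃ S : Finset G, IsRegularPDS S v k l m :=
  no_pds_of_nontrivial_center_general v k l m ν₂ ν₃ hZ hν₂ hν₃ h23 hd1 hd2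
end
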